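/- arXiv:math/0605436 — 5 statements merged into one kernel-verified Lean document; each statement's English description precedes it below -/
import Mathlib

section
/- Let p : ℝ → ℝ be a probability density that is symmetric (p(x) = p(−x)) and nonincreasing on [0,∞). Then for any real numbers t_1, ..., t_d, ∫_{−∞}^{∞} min_{1≤j≤d} p(|s − t_j|) ds = 2 ∫_{(M−m)/2}^{∞} p(s) ds, where M = max_j t_j and m = min_j t_j. -/
open MeasureTheory

/-- For a symmetric unimodal density `p`, the integral of the pointwise minimum of
the translates `p (|s - t j|)` equals twice the tail integral of `p` beyond half
the diameter of the set of locations. -/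
theorem integral_min_translates (d : ℕ) (hd : 0 < d) (p : ℝ → ℝ) (t : Fin d → ℝ)
    (hpos : ∀ x, 0 ≤ p x) (hint : Integrable p) (hone : ∫ x, p x = 1)
    (heven : ∀ x, p x = p (-x)) (hmono : AntitoneOn p (Set.Ici 0)) :
    ∫ s, Finset.univ.inf' ⟨⟨0, hd⟩, Finset.mem_univ _⟩ (fun j => p |s - t j|) =
      2 * ∫ s in Set.Ioi ((Finset.univ.sup' ⟨⟨0, hd⟩, Finset.mem_univ _⟩ t -
          Finset.univ.inf' ⟨⟨0, hd⟩, Finset.mem_univ _⟩ t) / 2), p s := by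
  have hne : (Finset.univ : Finset (Fin d)).Nonempty := ⟨⟨0, hd⟩, Finset.mem_univ _⟩
  set M := Finset.univ.sup' ⟨⟨0, hd⟩, Finset.mem_univ _⟩ t with hM
  set m := Finset.univ.inf' ⟨⟨0, hd⟩, Finset.mem_univ _⟩ t with hm
  set c := (M + m) / 2 with hc
  set r := (M - m) / 2 with hr
  have hmM : m ≤ M := by
    calc m ≤ t ⟨0, hd⟩ := Finset.inf'_le _ (Finset.mem_univ _)
      _ ≤ M := Finset.le_sup' _ (Finset.mem_univ _)
  have hr0 : 0 ≤ r := by simp only [hr]; linarith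
  -- pointwise identity
  have key : ∀ s : ℝ, Finset.univ.inf' ⟨⟨0, hd⟩, Finset.mem_univ _⟩
      (fun j => p |s - t j|) = p (|s - c| + r) := by
    intro s
    apply le_antisymm
    · rcases le_or_gt c s with hcs | hcs
      · obtain ⟨j, -, hj⟩ := Finset.exists_mem_eq_inf' hne t
        have h1 : |s - t j| = |s - c| + r := by
          rw [← hj, ← hm]
          rw [abs_of_nonneg (by simp only [hc] at hcs; linarith),
            abs_of_nonneg (by linarith)]
          simp only [hc, hr]; ring
        calc Finset.univ.inf' ⟨⟨0, hd⟩, Finset.mem_univ _⟩ (fun j => p |s - t j|)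
            ≤ p |s - t j| := Finset.inf'_le _ (Finset.mem_univ _)
          _ = p (|s - c| + r) := by rw [h1]
      · obtain ⟨j, -, hj⟩ := Finset.exists_mem_eq_sup' hne t
        have hcM : s < M := by simp only [hc] at hcs; linarith
        have h1 : |s - t j| = |s - c| + r := by
          rw [← hj, ← hM]
          rw [abs_of_nonpos (by linarith), abs_of_nonpos (by linarith)]
          simp only [hc, hr]; ring
        calc Finset.univ.inf' ⟨⟨0, hd⟩, Finset.mem_univ _⟩ (fun j => p |s - t j|)
            ≤ p |s - t j| := Finset.inf'_le _ (Finset.mem_univ _)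
          _ = p (|s - c| + r) := by rw [h1]
    · refine Finset.le_inf' _ _ fun j _ => ?_
      have htm : m ≤ t j := Finset.inf'_le _ (Finset.mem_univ _)
      have htM : t j ≤ M := Finset.le_sup' _ (Finset.mem_univ _)
      have habs : |s - t j| ≤ |s - c| + r := by
        have h1 : |s - t j| ≤ |s - c| + |c - t j| := by
          calc |s - t j| = |(s - c) + (c - t j)| := by ring_nf
            _ ≤ |s - c| + |c - t j| := abs_add_le _ _
        have h2 : |c - t j| ≤ r := by
          rw [abs_le]
          constructor <;> · simp only [hc, hr]; linarith
        linarith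
      exact hmono (Set.mem_Ici.2 (abs_nonneg _))
        (Set.mem_Ici.2 (by positivity)) habs
  have hgoal : (M - m) / 2 = r := rfl
  calc ∫ s, Finset.univ.inf' ⟨⟨0, hd⟩, Finset.mem_univ _⟩ (fun j => p |s - t j|)
      = ∫ s, p (|s - c| + r) := by congr 1; funext s; exact key s
    _ = ∫ u, p (|u| + r) := integral_sub_right_eq_self (fun u => p (|u| + r)) c
    _ = 2 * ∫ x in Set.Ioi (0 : ℝ), p (x + r) :=
        integral_comp_abs (f := fun x => p (x + r))
    _ = 2 * ∫ x in Set.Ioi r, p x := by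
        congr 1
        have hemb : MeasurableEmbedding (fun x : ℝ => x + r) :=
          (Homeomorph.addRight r).measurableEmbedding
        have hmp : MeasurePreserving (fun x : ℝ => x + r) volume volume :=
          measurePreserving_add_right volume r
        have := hmp.setIntegral_preimage_emb hemb p (Set.Ioi r)
        rw [Set.preimage_add_const_Ioi, sub_self] at this
        exact this
end

section
/- Let β > 0, t > 0, and w_1, w_2 > 0 with e^{−βt} ≤ w_2/w_1 ≤ e^{βt}. Then (β/2) ∫_{−∞}^{∞} max( e^{−β|s|}/w_1 , e^{−β|s−t|}/w_2 ) ds = 1/w_1 + 1/w_2 − e^{−βt/2}/√(w_1 w_2). -/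
/-!
Write `f s = e^{-β|s|}/w₁` and `g s = e^{-β|s-t|}/w₂`, so that `max f g = f + g - min f g`, and
`f`, `g` integrate to `2/(β w₁)`, `2/(β w₂)`. The hypothesis on `w₂/w₁` says that `min f g` is the
minimum of the decreasing exponential `e^{-βs}/w₁` and the increasing one `e^{β(s-t)}/w₂`; such a
minimum of `A e^{-βs}` and `B e^{βs}` is a translate of `√(AB) e^{-β|s|}`, of integral `2√(AB)/β`.
-/

open MeasureTheory Real

theorem max_eq_add_sub_min {α : Type*} [AddCommGroup α] [LinearOrder α]
    (a b : α) : max a b = a + b - min a b := by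
  rw [← min_add_max a b, add_sub_cancel_left]

section

variable {β : ℝ}

theorem integral_exp_neg_mul_abs (hβ : 0 < β) : ∫ s : ℝ, exp (-β * |s|) = 2 / β := by
  rw [integral_comp_abs (f := fun s => exp (-β * s)), integral_exp_mul_Ioi (neg_neg_of_pos hβ)]
  field_simp
  simp

theorem integrable_exp_neg_mul_abs (hβ : 0 < β) : Integrable fun s : ℝ => exp (-β * |s|) :=
  .of_integral_ne_zero (by rw [integral_exp_neg_mul_abs hβ]; positivity)

theorem min_sub_mul_add_mul_eq (hβ : 0 < β) (a b s : ℝ) :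
    min (a - β * s) (b + β * s) = (a + b) / 2 - β * |s - (a - b) / (2 * β)| := by
  rcases le_total (a - β * s) (b + β * s) with h | h
  · rw [min_eq_left h, abs_of_nonneg (sub_nonneg.2 ((div_le_iff₀ (by positivity)).2 (by linarith)))]
    field_simp
    ring
  · rw [min_eq_right h, abs_of_nonpos (sub_nonpos.2 ((le_div_iff₀ (by positivity)).2 (by linarith)))]
    field_simp
    ring

theorem integral_exp_min_sub_mul_add_mul (hβ : 0 < β) (a b : ℝ) :
    ∫ s, exp (min (a - β * s) (b + β * s)) = 2 * exp ((a + b) / 2) / β := by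
  have h (s : ℝ) : exp (min (a - β * s) (b + β * s)) =
      exp ((a + b) / 2) * exp (-β * |s - (a - b) / (2 * β)|) := by
    rw [min_sub_mul_add_mul_eq hβ, ← exp_add, neg_mul, sub_eq_add_neg]
  simp_rw [h]
  rw [integral_const_mul, integral_sub_right_eq_self (fun s => exp (-β * |s|)),
    integral_exp_neg_mul_abs hβ]
  ring

/-- Since `-β|x| = min (-βx) (βx)`, the left side is a minimum of four affine functions of `s`;
the hypotheses say that `-p + βs` and `-q - β(s - t)` never attain it. -/
theorem min_neg_mul_abs_sub_eq (hβ : 0 ≤ β) {p q t : ℝ} (hpq : p - q ≤ β * t)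
    (hqp : q - p ≤ β * t) (s : ℝ) :
    min (-β * |s| - p) (-β * |s - t| - q) = min (-p - β * s) (-q - β * t + β * s) := by
  rcases abs_cases s with ⟨hs, hs0⟩ | ⟨hs, hs0⟩ <;>
    rcases abs_cases (s - t) with ⟨hst, hst0⟩ | ⟨hst, hst0⟩ <;>
    rw [hs, hst] <;> simp only [min_def] <;> split_ifs <;> nlinarith

end

theorem exponential_model_middle_general (β t w₁ w₂ : ℝ) (hβ : 0 < β)
    (hw₁ : 0 < w₁) (hw₂ : 0 < w₂)
    (h₁ : w₁ * Real.exp (-β * t) ≤ w₂) (h₂ : w₂ ≤ w₁ * Real.exp (β * t)) :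
    (β / 2) * ∫ s, max (Real.exp (-β * |s|) / w₁) (Real.exp (-β * |s - t|) / w₂) =
      1 / w₁ + 1 / w₂ - Real.exp (-β * t / 2) / Real.sqrt (w₁ * w₂) := by
  have hlog₁ : log w₁ - log w₂ ≤ β * t := by
    have h := log_le_log (by positivity) h₁
    rw [log_mul hw₁.ne' (exp_pos _).ne', log_exp] at h
    linarith
  have hlog₂ : log w₂ - log w₁ ≤ β * t := by
    have h := log_le_log hw₂ h₂
    rw [log_mul hw₁.ne' (exp_pos _).ne', log_exp] at h
    linarith
  set f : ℝ → ℝ := fun s => exp (-β * |s|) / w₁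
  set g : ℝ → ℝ := fun s => exp (-β * |s - t|) / w₂
  have hf : Integrable f := (integrable_exp_neg_mul_abs hβ).div_const w₁
  have hg : Integrable g := ((integrable_exp_neg_mul_abs hβ).comp_sub_right t).div_const w₂
  have hmin (s : ℝ) : min (f s) (g s) = exp (min (-log w₁ - β * s) (-log w₂ - β * t + β * s)) := by
    rw [← min_neg_mul_abs_sub_eq hβ.le hlog₁ hlog₂, exp_monotone.map_min, exp_sub, exp_sub,
      exp_log hw₁, exp_log hw₂]
  have hfg : ∫ s, max (f s) (g s) = (∫ s, f s) + (∫ s, g s) - ∫ s, min (f s) (g s) := by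
    simp_rw [max_eq_add_sub_min]
    rw [integral_sub (f := fun s => f s + g s) (g := fun s => min (f s) (g s)) (hf.add hg)
      (hf.inf hg), integral_add hf hg]
  have hsqrt : exp ((-log w₁ + (-log w₂ - β * t)) / 2) = exp (-β * t / 2) / √(w₁ * w₂) := by
    rw [sqrt_eq_rpow, rpow_def_of_pos (by positivity), log_mul hw₁.ne' hw₂.ne', ← exp_sub]
    ring_nf
  have hf_int : ∫ s, f s = 2 / β / w₁ := by
    rw [integral_div, integral_exp_neg_mul_abs hβ]
  have hg_int : ∫ s, g s = 2 / β / w₂ := by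
    rw [integral_div, integral_sub_right_eq_self (fun s => exp (-β * |s|)),
      integral_exp_neg_mul_abs hβ]
  rw [hfg, hf_int, hg_int, funext hmin, integral_exp_min_sub_mul_add_mul hβ, hsqrt]
  field_simp

/-- Middle case of the bivariate exponential model: the exponent measure. -/
theorem exponential_model_middle (β t w₁ w₂ : ℝ) (hβ : 0 < β) (ht : 0 < t)
    (hw₁ : 0 < w₁) (hw₂ : 0 < w₂)
    (h₁ : w₁ * Real.exp (-β * t) ≤ w₂) (h₂ : w₂ ≤ w₁ * Real.exp (β * t)) :
    (β / 2) * ∫ s, max (Real.exp (-β * |s|) / w₁) (Real.exp (-β * |s - t|) / w₂) =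
      1 / w₁ + 1 / w₂ - Real.exp (-β * t / 2) / Real.sqrt (w₁ * w₂) :=
  exponential_model_middle_general β t w₁ w₂ hβ hw₁ hw₂ h₁ h₂
end

section
/- Let β > 0, t ≠ 0, and w_1, w_2 > 0. Then (β/√(2π)) ∫_{−∞}^{∞} max( e^{−β²s²/2}/w_1 , e^{−β²(s−t)²/2}/w_2 ) ds = (1/w_1) Φ( β|t|/2 + (1/(β|t|)) log(w_2/w_1) ) + (1/w_2) Φ( β|t|/2 + (1/(β|t|)) log(w_1/w_2) ), where Φ is the standard normal CDF. -/
open MeasureTheory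

/-- The standard normal cumulative distribution function. -/
noncomputable def stdNormalCDF (u : ℝ) : ℝ :=
  (Real.sqrt (2 * Real.pi))⁻¹ * ∫ x in Set.Iic u, Real.exp (-x ^ 2 / 2)

/-!
Reflecting `s ↦ -s` turns `t` into `-t`, so we may assume `t > 0`. Then the second weighted
Gaussian is `exp (β² t (s - s₀))` times the first, where
`s₀ = t / 2 + log (w₂ / w₁) / (β² t)`; hence the maximum is the first term on `(-∞, s₀]` and the
second on `(s₀, ∞)`. After the substitutions `x = β s` and `x = β (t - s)` the two pieces are
`Φ (β s₀) / w₁` and `Φ (β (t - s₀)) / w₂`.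
-/

open Set Real

section ChangeOfVariables

variable {E : Type*} [NormedAddCommGroup E] [NormedSpace ℝ E]

theorem integral_comp_mul_left_Iic (g : ℝ → E) (a : ℝ) {b : ℝ} (hb : 0 < b) :
    ∫ x in Iic a, g (b * x) = b⁻¹ • ∫ x in Iic (b * a), g x := by
  rw [← neg_neg a, ← integral_comp_neg_Ioi]
  simp only [mul_neg]
  rw [integral_comp_mul_left_Ioi (fun x => g (-x)) (-a) hb, integral_comp_neg_Ioi, mul_neg]

theorem integral_comp_sub_left_Ioi (g : ℝ → E) (a d : ℝ) :
    ∫ x in Ioi a, g (d - x) = ∫ x in Iic (d - a), g x := by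
  have h := (Measure.measurePreserving_sub_left volume d).setIntegral_preimage_emb
    (measurableEmbedding_subLeft d) g (Iic (d - a))
  rwa [preimage_const_sub_Iic, sub_sub_cancel, integral_Ici_eq_integral_Ioi] at h

end ChangeOfVariables

theorem integral_max_eq_integral_Iic_add_integral_Ioi {f g : ℝ → ℝ} (hf : Integrable f)
    (hg : Integrable g) (c : ℝ) (h_left : ∀ x ≤ c, g x ≤ f x) (h_right : ∀ x, c < x → f x ≤ g x) :
    ∫ x, max (f x) (g x) = (∫ x in Iic c, f x) + ∫ x in Ioi c, g x := by
  have hmax : Integrable fun x => max (f x) (g x) := hf.sup hg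
  rw [← intervalIntegral.integral_Iic_add_Ioi hmax.integrableOn hmax.integrableOn]
  congr 1
  · exact setIntegral_congr_fun measurableSet_Iic fun x hx => max_eq_left (h_left x hx)
  · exact setIntegral_congr_fun measurableSet_Ioi fun x hx => max_eq_right (h_right x hx)

theorem integrable_exp_neg_sq_mul_sub_sq {β : ℝ} (hβ : β ≠ 0) (t : ℝ) :
    Integrable fun s => exp (-β ^ 2 * (s - t) ^ 2 / 2) := by
  have h := (integrable_exp_neg_mul_sq (b := β ^ 2 / 2) (by positivity)).comp_sub_right t
  exact h.congr (.of_forall fun s => by ring_nf)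

theorem mul_integral_Iic_exp_neg_sq_mul_sq {β : ℝ} (hβ : 0 < β) (a : ℝ) :
    (β / √(2 * π)) * ∫ s in Iic a, exp (-β ^ 2 * s ^ 2 / 2) = stdNormalCDF (β * a) := by
  have h := integral_comp_mul_left_Iic (fun x => exp (-x ^ 2 / 2)) a hβ
  simp only [mul_pow, smul_eq_mul, ← neg_mul] at h
  rw [stdNormalCDF, h]
  field_simp

theorem mul_integral_Ioi_exp_neg_sq_mul_sub_sq {β : ℝ} (hβ : 0 < β) (a t : ℝ) :
    (β / √(2 * π)) * ∫ s in Ioi a, exp (-β ^ 2 * (s - t) ^ 2 / 2) =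
      stdNormalCDF (β * (t - a)) := by
  rw [← mul_integral_Iic_exp_neg_sq_mul_sq hβ,
    ← integral_comp_sub_left_Ioi (fun s => exp (-β ^ 2 * s ^ 2 / 2))]
  simp only [← neg_sub t, neg_sq]

noncomputable def normalCrossing (β t w₁ w₂ : ℝ) : ℝ :=
  t / 2 + log (w₂ / w₁) / (β ^ 2 * t)

theorem exp_neg_sq_mul_sub_sq_div_eq {β t w₁ w₂ : ℝ} (hβ : β ≠ 0) (ht : t ≠ 0) (hw₁ : 0 < w₁)
    (hw₂ : 0 < w₂) (s : ℝ) :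
    exp (-β ^ 2 * (s - t) ^ 2 / 2) / w₂ =
      exp (β ^ 2 * t * (s - normalCrossing β t w₁ w₂)) * (exp (-β ^ 2 * s ^ 2 / 2) / w₁) := by
  have hexponent : β ^ 2 * t * (s - normalCrossing β t w₁ w₂) + -β ^ 2 * s ^ 2 / 2 =
      -β ^ 2 * (s - t) ^ 2 / 2 - log (w₂ / w₁) := by
    rw [normalCrossing]
    field_simp
    ring
  rw [mul_div_assoc', ← exp_add, hexponent, exp_sub, exp_log (div_pos hw₂ hw₁)]
  field_simp

theorem mul_normalCrossing {β t : ℝ} (hβ : 0 < β) (ht : 0 < t) (w₁ w₂ : ℝ) :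
    β * normalCrossing β t w₁ w₂ = β * |t| / 2 + 1 / (β * |t|) * log (w₂ / w₁) := by
  rw [abs_of_pos ht, normalCrossing]
  field_simp

theorem mul_sub_normalCrossing {β t : ℝ} (hβ : 0 < β) (ht : 0 < t) (w₁ w₂ : ℝ) :
    β * (t - normalCrossing β t w₁ w₂) = β * |t| / 2 + 1 / (β * |t|) * log (w₁ / w₂) := by
  rw [abs_of_pos ht, normalCrossing, ← inv_div w₂, log_inv]
  field_simp
  ring

theorem normal_model_exponent_of_pos {β t w₁ w₂ : ℝ} (hβ : 0 < β) (ht : 0 < t) (hw₁ : 0 < w₁)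
    (hw₂ : 0 < w₂) :
    (β / √(2 * π)) *
        ∫ s, max (exp (-β ^ 2 * s ^ 2 / 2) / w₁) (exp (-β ^ 2 * (s - t) ^ 2 / 2) / w₂) =
      1 / w₁ * stdNormalCDF (β * |t| / 2 + 1 / (β * |t|) * log (w₂ / w₁)) +
      1 / w₂ * stdNormalCDF (β * |t| / 2 + 1 / (β * |t|) * log (w₁ / w₂)) := by
  set s₀ := normalCrossing β t w₁ w₂
  have hcross := exp_neg_sq_mul_sub_sq_div_eq hβ.ne' ht.ne' hw₁ hw₂
  have h_left : ∀ s ≤ s₀,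
      exp (-β ^ 2 * (s - t) ^ 2 / 2) / w₂ ≤ exp (-β ^ 2 * s ^ 2 / 2) / w₁ := fun s hs => by
    rw [hcross]
    refine mul_le_of_le_one_left (by positivity) (exp_le_one_iff.2 ?_)
    exact mul_nonpos_of_nonneg_of_nonpos (by positivity) (sub_nonpos.2 hs)
  have h_right : ∀ s, s₀ < s →
      exp (-β ^ 2 * s ^ 2 / 2) / w₁ ≤ exp (-β ^ 2 * (s - t) ^ 2 / 2) / w₂ := fun s hs => by
    rw [hcross]
    refine le_mul_of_one_le_left (by positivity) (one_le_exp ?_)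
    exact mul_nonneg (by positivity) (sub_nonneg.2 hs.le)
  have hf : Integrable fun s => exp (-β ^ 2 * s ^ 2 / 2) / w₁ := by
    simpa using (integrable_exp_neg_sq_mul_sub_sq hβ.ne' 0).div_const w₁
  have hg := (integrable_exp_neg_sq_mul_sub_sq hβ.ne' t).div_const w₂
  rw [integral_max_eq_integral_Iic_add_integral_Ioi hf hg s₀ h_left h_right, integral_div,
    integral_div, ← mul_normalCrossing hβ ht, ← mul_sub_normalCrossing hβ ht,
    ← mul_integral_Iic_exp_neg_sq_mul_sq hβ, ← mul_integral_Ioi_exp_neg_sq_mul_sub_sq hβ]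
  ring

theorem integral_max_exp_neg_sq_mul_sub_neg_sq (β t w₁ w₂ : ℝ) :
    ∫ s, max (exp (-β ^ 2 * s ^ 2 / 2) / w₁) (exp (-β ^ 2 * (s - -t) ^ 2 / 2) / w₂) =
      ∫ s, max (exp (-β ^ 2 * s ^ 2 / 2) / w₁) (exp (-β ^ 2 * (s - t) ^ 2 / 2) / w₂) := by
  rw [← integral_neg_eq_self]
  congr 1 with s
  rw [neg_sq, sub_neg_eq_add, neg_add_eq_sub, ← neg_sub, neg_sq]

/-- The exponent measure for the one-dimensional normal (Hüsler–Reiss) model. -/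
theorem normal_model_exponent (β t w₁ w₂ : ℝ) (hβ : 0 < β) (ht : t ≠ 0)
    (hw₁ : 0 < w₁) (hw₂ : 0 < w₂) :
    (β / Real.sqrt (2 * Real.pi)) *
        ∫ s, max (Real.exp (-β ^ 2 * s ^ 2 / 2) / w₁)
          (Real.exp (-β ^ 2 * (s - t) ^ 2 / 2) / w₂) =
      (1 / w₁) * stdNormalCDF (β * |t| / 2 + (1 / (β * |t|)) * Real.log (w₂ / w₁)) +
      (1 / w₂) * stdNormalCDF (β * |t| / 2 + (1 / (β * |t|)) * Real.log (w₁ / w₂)) := by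
  wlog htpos : 0 < t generalizing t
  · have h := this (-t) (neg_ne_zero.2 ht)
      (neg_pos.2 ((not_lt.1 htpos).lt_of_ne ht))
    rwa [abs_neg, integral_max_exp_neg_sq_mul_sub_neg_sq] at h
  exact normal_model_exponent_of_pos hβ htpos hw₁ hw₂
end

section
/- Let β > 0 and t = (t_1,t_2) ∈ ℝ² with |t| = √(t_1²+t_2²) > 0. Then for w_1, w_2 > 0, (β²/(2π)) ∫_{ℝ²} max( e^{−β²|u|²/2}/w_1 , e^{−β²|u−t|²/2}/w_2 ) du = (1/w_1) Φ( β|t|/2 + (1/(β|t|)) log(w_2/w_1) ) + (1/w_2) Φ( β|t|/2 + (1/(β|t|)) log(w_1/w_2) ). -/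
/-
Substituting `u ↦ β • u` reduces to `β = 1`, and a reflection moves `t` to `(‖t‖, 0)`. The
integrand then factors as a function of the first coordinate times the Gaussian `exp (-y²/2)`
in the second. On the line, `exp (-x²/2) / w₁` and `exp (-(x - d)²/2) / w₂` cross exactly once,
at `c = d/2 + log (w₂/w₁)/d`, so the maximum integrates to a Gaussian integral over `(-∞, c]`
plus a shifted one over `(c, ∞)`, i.e. `√(2π) (Φ(c)/w₁ + Φ(d - c)/w₂)`.
-/

open MeasureTheory

open Real Set

theorem integral_Iic_exp_neg_sq_div_two (c : ℝ) :
    ∫ x in Iic c, exp (-x ^ 2 / 2) = √(2 * π) * stdNormalCDF c := by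
  rw [stdNormalCDF, mul_inv_cancel_left₀ (by positivity)]

theorem integral_Ioi_exp_neg_sub_sq_div_two (c d : ℝ) :
    ∫ x in Ioi c, exp (-(x - d) ^ 2 / 2) = √(2 * π) * stdNormalCDF (d - c) := by
  have hpre : (fun x => d - x) ⁻¹' Iio (d - c) = Ioi c := by ext; simp
  have hsub := (Measure.measurePreserving_sub_left volume d).setIntegral_preimage_emb
    (measurableEmbedding_subLeft d) (fun t => exp (-t ^ 2 / 2)) (Iio (d - c))
  rw [← integral_Iic_exp_neg_sq_div_two, integral_Iic_eq_integral_Iio, ← hsub, hpre]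
  refine setIntegral_congr_fun measurableSet_Ioi fun x _ => ?_
  ring_nf

theorem integral_exp_neg_sq_div_two : ∫ x, exp (-x ^ 2 / 2) = √(2 * π) := by
  simpa [div_eq_inv_mul, neg_div, ← neg_mul, div_inv_eq_mul, mul_comm] using
    integral_gaussian (1 / 2)

theorem integrable_exp_neg_sq_div_two : Integrable fun x : ℝ => exp (-x ^ 2 / 2) := by
  simpa [div_eq_inv_mul, neg_div, ← neg_mul] using
    integrable_exp_neg_mul_sq (b := 1 / 2) (by norm_num)

theorem integral_max_eq_of_le_of_ge {f g : ℝ → ℝ} (hf : Integrable f) (hg : Integrable g)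
    {c : ℝ} (hle : ∀ x ≤ c, g x ≤ f x) (hge : ∀ x > c, f x ≤ g x) :
    ∫ x, max (f x) (g x) = (∫ x in Iic c, f x) + ∫ x in Ioi c, g x := by
  have hfg : Integrable fun x => max (f x) (g x) := hf.sup hg
  rw [← intervalIntegral.integral_Iic_add_Ioi (b := c) hfg.integrableOn hfg.integrableOn,
    setIntegral_congr_fun measurableSet_Iic fun x hx => max_eq_left (hle x hx),
    setIntegral_congr_fun measurableSet_Ioi fun x hx => max_eq_right (hge x hx)]

section

variable {G : Type*} [NormedAddCommGroup G] [NormedSpace ℝ G]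

theorem integral_norm_norm_sub_eq_of_norm_eq {E : Type*} [NormedAddCommGroup E]
    [InnerProductSpace ℝ E] [FiniteDimensional ℝ E] [MeasurableSpace E] [BorelSpace E]
    (g : ℝ → ℝ → G) {s t : E} (h : ‖s‖ = ‖t‖) :
    ∫ u, g ‖u‖ ‖u - s‖ = ∫ u, g ‖u‖ ‖u - t‖ := by
  set R := (ℝ ∙ (s - t))ᗮ.reflection
  have hR : R s = t := Submodule.reflection_sub h
  rw [← integral_comp R fun u => g ‖u‖ ‖u - t‖]
  congr with u
  rw [← hR, ← map_sub, R.norm_map, R.norm_map]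

theorem EuclideanSpace.integral_fin_two (f : EuclideanSpace ℝ (Fin 2) → G) :
    ∫ u, f u = ∫ p : ℝ × ℝ, f !₂[p.1, p.2] := by
  exact (((PiLp.volume_preserving_toLp (Fin 2)).comp
    (volume_preserving_finTwoArrow ℝ).symm).integral_comp'
    (f := MeasurableEquiv.finTwoArrow.symm.trans (MeasurableEquiv.toLp 2 _)) f).symm

end

theorem integral_max_exp_neg_sq_div_two_shift {d w₁ w₂ : ℝ} (hd : 0 < d) (hw₁ : 0 < w₁)
    (hw₂ : 0 < w₂) :
    ∫ x, max (exp (-x ^ 2 / 2) / w₁) (exp (-(x - d) ^ 2 / 2) / w₂) =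
      √(2 * π) * (stdNormalCDF (d / 2 + log (w₂ / w₁) / d) / w₁ +
        stdNormalCDF (d / 2 + log (w₁ / w₂) / d) / w₂) := by
  set c := d / 2 + log (w₂ / w₁) / d
  have hcross : ∀ x, exp (-(x - d) ^ 2 / 2) / w₂ ≤ exp (-x ^ 2 / 2) / w₁ ↔ x ≤ c := by
    intro x
    have hgap : -x ^ 2 / 2 + log w₂ - (-(x - d) ^ 2 / 2 + log w₁) = d * (c - x) := by
      simp only [c]
      rw [log_div hw₂.ne' hw₁.ne']
      field_simp
      ring
    rw [div_le_div_iff₀ hw₂ hw₁, ← exp_log hw₁, ← exp_log hw₂, ← exp_add, ← exp_add, exp_le_exp,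
      ← sub_nonneg, hgap, mul_nonneg_iff_of_pos_left hd, sub_nonneg]
  have hdc : d - c = d / 2 + log (w₁ / w₂) / d := by
    simp only [c]
    rw [log_div hw₂.ne' hw₁.ne', log_div hw₁.ne' hw₂.ne']
    ring
  rw [integral_max_eq_of_le_of_ge (integrable_exp_neg_sq_div_two.div_const w₁)
      ((integrable_exp_neg_sq_div_two.comp_sub_right d).div_const w₂)
      (c := c) (fun x hx => (hcross x).2 hx)
      (fun x hx => (not_le.1 ((hcross x).not.2 hx.not_ge)).le),
    integral_div, integral_div, integral_Iic_exp_neg_sq_div_two,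
    integral_Ioi_exp_neg_sub_sq_div_two, hdc]
  ring

theorem EuclideanSpace.norm_sq_fin_two (x y : ℝ) : ‖!₂[x, y]‖ ^ 2 = x ^ 2 + y ^ 2 := by
  simp [EuclideanSpace.real_norm_sq_eq]

theorem integral_max_exp_neg_norm_sq_div_two_sub {t : EuclideanSpace ℝ (Fin 2)} (ht : t ≠ 0)
    {w₁ w₂ : ℝ} (hw₁ : 0 < w₁) (hw₂ : 0 < w₂) :
    ∫ u, max (exp (-‖u‖ ^ 2 / 2) / w₁) (exp (-‖u - t‖ ^ 2 / 2) / w₂) =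
      2 * π * (stdNormalCDF (‖t‖ / 2 + log (w₂ / w₁) / ‖t‖) / w₁ +
        stdNormalCDF (‖t‖ / 2 + log (w₁ / w₂) / ‖t‖) / w₂) := by
  set d := ‖t‖
  have hd : 0 < d := norm_pos_iff.2 ht
  have hnorm : ‖t‖ = ‖!₂[d, 0]‖ := by
    rw [← sq_eq_sq₀ (norm_nonneg _) (norm_nonneg _), EuclideanSpace.norm_sq_fin_two]
    ring
  have hsplit : ∀ x y : ℝ, max (exp (-‖!₂[x, y]‖ ^ 2 / 2) / w₁)
      (exp (-‖!₂[x, y] - !₂[d, 0]‖ ^ 2 / 2) / w₂) =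
      max (exp (-x ^ 2 / 2) / w₁) (exp (-(x - d) ^ 2 / 2) / w₂) * exp (-y ^ 2 / 2) := by
    intro x y
    have hsub : !₂[x, y] - !₂[d, 0] = !₂[x - d, y] := by ext i; fin_cases i <;> simp
    rw [hsub, EuclideanSpace.norm_sq_fin_two, EuclideanSpace.norm_sq_fin_two,
      max_mul_of_nonneg _ _ (exp_pos _).le, div_mul_eq_mul_div, div_mul_eq_mul_div,
      ← exp_add, ← exp_add]
    ring_nf
  rw [integral_norm_norm_sub_eq_of_norm_eq
      (fun r s => max (exp (-r ^ 2 / 2) / w₁) (exp (-s ^ 2 / 2) / w₂)) hnorm,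
    EuclideanSpace.integral_fin_two]
  simp only [hsplit]
  rw [Measure.volume_eq_prod, integral_prod_mul
      (fun x => max (exp (-x ^ 2 / 2) / w₁) (exp (-(x - d) ^ 2 / 2) / w₂))
      (fun y => exp (-y ^ 2 / 2)), integral_max_exp_neg_sq_div_two_shift hd hw₁ hw₂,
    integral_exp_neg_sq_div_two, mul_right_comm, mul_self_sqrt (by positivity)]

/-- The exponent measure for the two-dimensional normal model. -/
theorem normal_model_exponent_2D (β : ℝ) (hβ : 0 < β)
    (t : EuclideanSpace ℝ (Fin 2)) (ht : t ≠ 0)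
    (w₁ w₂ : ℝ) (hw₁ : 0 < w₁) (hw₂ : 0 < w₂) :
    (β ^ 2 / (2 * Real.pi)) * ∫ u : EuclideanSpace ℝ (Fin 2),
        max (Real.exp (-β ^ 2 * ‖u‖ ^ 2 / 2) / w₁)
          (Real.exp (-β ^ 2 * ‖u - t‖ ^ 2 / 2) / w₂) =
      (1 / w₁) * stdNormalCDF (β * ‖t‖ / 2 + (1 / (β * ‖t‖)) * Real.log (w₂ / w₁)) +
      (1 / w₂) * stdNormalCDF (β * ‖t‖ / 2 + (1 / (β * ‖t‖)) * Real.log (w₁ / w₂)) := by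
  have hunit := integral_max_exp_neg_norm_sq_div_two_sub (smul_ne_zero hβ.ne' ht) hw₁ hw₂
  have hscale := Measure.integral_comp_smul volume (fun v : EuclideanSpace ℝ (Fin 2) =>
    max (exp (-‖v‖ ^ 2 / 2) / w₁) (exp (-‖v - β • t‖ ^ 2 / 2) / w₂)) β
  simp only [← smul_sub, norm_smul, mul_pow, norm_eq_abs, sq_abs, finrank_euclideanSpace_fin,
    ← neg_mul, smul_eq_mul, abs_inv, abs_pow] at hscale
  rw [hscale, hunit, norm_smul, norm_eq_abs, abs_of_pos hβ]
  simp only [one_div_mul_eq_div]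
  generalize stdNormalCDF _ = P₁, stdNormalCDF _ = P₂
  field_simp
end

section
/- Define χ(s) = −s Φ(−c/2 − (log s)/c) − Φ(−c/2 + (log s)/c) for s > 0, where c > 0 is a constant and Φ is the standard normal CDF. Then χ is continuous on (0,∞), χ(s) → 0 as s → 0⁺, χ(s)/s → 0 as s → ∞, and −min(1,s) ≤ χ(s) ≤ 0 for all s > 0, so that 1/w_1 + 1/w_2 + (1/w_2)χ(w_2/w_1) ≥ max(1/w_1, 1/w_2) for all w_1, w_2 > 0. -/
open MeasureTheory

/-- The dependence function χ of the normal (Hüsler–Reiss) model. -/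
noncomputable def hrChi (c : ℝ) (s : ℝ) : ℝ :=
  -s * stdNormalCDF (-c / 2 - Real.log s / c) - stdNormalCDF (-c / 2 + Real.log s / c)

namespace HRaux

lemma gauss_eq : (fun x : ℝ => Real.exp (-x ^ 2 / 2)) =
    fun x : ℝ => Real.exp (-(1/2 : ℝ) * x ^ 2) := by
  funext x; ring_nf

lemma gauss_integrable : Integrable (fun x : ℝ => Real.exp (-x ^ 2 / 2)) := by
  rw [gauss_eq]; exact integrable_exp_neg_mul_sq (by norm_num)

lemma gauss_total : ∫ x : ℝ, Real.exp (-x ^ 2 / 2) = Real.sqrt (2 * Real.pi) := by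
  rw [gauss_eq, integral_gaussian]
  rw [show Real.pi / (1/2 : ℝ) = 2 * Real.pi by ring]

lemma sqrt_pos : 0 < Real.sqrt (2 * Real.pi) :=
  Real.sqrt_pos.2 (by positivity)

lemma Phi_nonneg (u : ℝ) : 0 ≤ stdNormalCDF u := by
  have h : 0 ≤ ∫ x in Set.Iic u, Real.exp (-x ^ 2 / 2) :=
    setIntegral_nonneg measurableSet_Iic fun x _ => (Real.exp_pos _).le
  exact mul_nonneg (inv_nonneg.2 sqrt_pos.le) h

lemma Phi_le_one (u : ℝ) : stdNormalCDF u ≤ 1 := by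
  have h : ∫ x in Set.Iic u, Real.exp (-x ^ 2 / 2) ≤ ∫ x : ℝ, Real.exp (-x ^ 2 / 2) :=
    setIntegral_le_integral gauss_integrable
      (Filter.Eventually.of_forall fun x => (Real.exp_pos _).le)
  calc stdNormalCDF u ≤ (Real.sqrt (2 * Real.pi))⁻¹ * Real.sqrt (2 * Real.pi) := by
        rw [stdNormalCDF]
        exact mul_le_mul_of_nonneg_left (gauss_total ▸ h) (inv_nonneg.2 sqrt_pos.le)
    _ = 1 := inv_mul_cancel₀ sqrt_pos.ne'

lemma Phi_add_Phi_neg (u : ℝ) : stdNormalCDF u + stdNormalCDF (-u) = 1 := by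
  have h1 : ∫ x in Set.Iic (-u), Real.exp (-x ^ 2 / 2)
      = ∫ x in Set.Ioi u, Real.exp (-x ^ 2 / 2) := by
    have h := integral_comp_neg_Iic (-u) (fun x => Real.exp (-x ^ 2 / 2))
    rw [neg_neg] at h
    rw [← h]
    refine setIntegral_congr_fun measurableSet_Iic fun x _ => by ring_nf
  have h2 : (∫ x in Set.Iic u, Real.exp (-x ^ 2 / 2))
      + ∫ x in Set.Ioi u, Real.exp (-x ^ 2 / 2) = Real.sqrt (2 * Real.pi) := by
    rw [intervalIntegral.integral_Iic_add_Ioi gauss_integrable.integrableOn gauss_integrable.integrableOn,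
      gauss_total]
  rw [stdNormalCDF, stdNormalCDF, h1, ← mul_add, h2, inv_mul_cancel₀ sqrt_pos.ne']

/-- translation of the Iic integral -/
lemma integral_Iic_shift (f : ℝ → ℝ) (u d : ℝ) :
    (∫ x in Set.Iic u, f (x + d)) = ∫ x in Set.Iic (u + d), f x := by
  have A : MeasurableEmbedding fun x : ℝ => x + d :=
    (Homeomorph.addRight d).isClosedEmbedding.measurableEmbedding
  have := A.setIntegral_map (μ := volume) f (Set.Iic (u + d))
  rw [map_add_right_eq_self (volume : Measure ℝ) d] at this
  have hpre : (fun x : ℝ => x + d) ⁻¹' Set.Iic (u + d) = Set.Iic u := by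
    ext x; simp
  rw [this, hpre]

/-- The key Gaussian shift inequality. -/
lemma shift_ineq {c : ℝ} (hc : 0 < c) (u : ℝ) :
    Real.exp (c ^ 2 / 2 - c * u) * stdNormalCDF (u - c) ≤ stdNormalCDF u := by
  have hshift : (∫ x in Set.Iic (u - c), Real.exp (-x ^ 2 / 2))
      = ∫ x in Set.Iic u, Real.exp (-(x - c) ^ 2 / 2) := by
    have := integral_Iic_shift (fun x => Real.exp (-x ^ 2 / 2)) u (-c)
    simp only [← sub_eq_add_neg] at this
    exact this.symm
  have hint : IntegrableOn (fun x : ℝ =>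
      Real.exp (c ^ 2 / 2 - c * u) * Real.exp (-(x - c) ^ 2 / 2)) (Set.Iic u) := by
    exact ((gauss_integrable.comp_sub_right c).const_mul _).integrableOn
  have hmono : (∫ x in Set.Iic u, Real.exp (c ^ 2 / 2 - c * u) * Real.exp (-(x - c) ^ 2 / 2))
      ≤ ∫ x in Set.Iic u, Real.exp (-x ^ 2 / 2) := by
    refine setIntegral_mono_on hint gauss_integrable.integrableOn measurableSet_Iic ?_
    intro x hx
    rw [← Real.exp_add]
    apply Real.exp_le_exp.2
    have hxu : x ≤ u := hx
    nlinarith [mul_nonneg hc.le (sub_nonneg.2 hxu)]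
  calc Real.exp (c ^ 2 / 2 - c * u) * stdNormalCDF (u - c)
      = (Real.sqrt (2 * Real.pi))⁻¹ *
        ∫ x in Set.Iic u, Real.exp (c ^ 2 / 2 - c * u) * Real.exp (-(x - c) ^ 2 / 2) := by
        rw [stdNormalCDF, hshift, integral_const_mul]; ring
    _ ≤ (Real.sqrt (2 * Real.pi))⁻¹ * ∫ x in Set.Iic u, Real.exp (-x ^ 2 / 2) :=
        mul_le_mul_of_nonneg_left hmono (inv_nonneg.2 sqrt_pos.le)
    _ = stdNormalCDF u := rfl

lemma Phi_le_exp (u : ℝ) : stdNormalCDF u ≤ Real.exp (u + 1/2) := by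
  have h := shift_ineq (c := 1) one_pos (u + 1)
  simp only [one_pow, one_mul, add_sub_cancel_right] at h
  have h2 : Real.exp (1 / 2 - (u + 1)) * stdNormalCDF u ≤ 1 :=
    h.trans (Phi_le_one _)
  calc stdNormalCDF u
      = Real.exp (-(1 / 2 - (u + 1))) * (Real.exp (1 / 2 - (u + 1)) * stdNormalCDF u) := by
        rw [← mul_assoc, ← Real.exp_add]; simp
    _ ≤ Real.exp (-(1 / 2 - (u + 1))) * 1 :=
        mul_le_mul_of_nonneg_left h2 (Real.exp_pos _).le
    _ = Real.exp (u + 1/2) := by rw [mul_one]; congr 1; ring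

lemma Phi_tendsto_atBot : Filter.Tendsto stdNormalCDF Filter.atBot (nhds 0) := by
  have h1 : Filter.Tendsto (fun u : ℝ => Real.exp (u + 1/2)) Filter.atBot (nhds 0) :=
    Real.tendsto_exp_atBot.comp (Filter.tendsto_atBot_add_const_right _ _ Filter.tendsto_id)
  exact tendsto_of_tendsto_of_tendsto_of_le_of_le tendsto_const_nhds h1
    (fun u => Phi_nonneg u) (fun u => Phi_le_exp u)

lemma Phi_continuous : Continuous stdNormalCDF := by
  have key : ∀ u : ℝ, stdNormalCDF u = (Real.sqrt (2 * Real.pi))⁻¹ *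
      ((∫ x in Set.Iic (0:ℝ), Real.exp (-x ^ 2 / 2)) +
        ∫ x in (0:ℝ)..u, Real.exp (-x ^ 2 / 2)) := by
    intro u
    rw [stdNormalCDF]
    congr 1
    rw [← intervalIntegral.integral_Iic_sub_Iic gauss_integrable.integrableOn
      gauss_integrable.integrableOn]
    ring
  simp only [funext key]
  exact continuous_const.mul (continuous_const.add
    (gauss_integrable.continuous_primitive 0))

/-- The central bound: for all `s > 0`. -/
lemma key_le_one {c : ℝ} (hc : 0 < c) {s : ℝ} (hs : 0 < s) :
    s * stdNormalCDF (-c / 2 - Real.log s / c) +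
      stdNormalCDF (-c / 2 + Real.log s / c) ≤ 1 := by
  set t := Real.log s with ht
  have harg : c ^ 2 / 2 - c * (c / 2 - t / c) = t := by
    field_simp
    ring
  have h := shift_ineq hc (c / 2 - t / c)
  rw [harg, Real.exp_log hs] at h
  have harg2 : c / 2 - t / c - c = -c / 2 - t / c := by ring
  rw [harg2] at h
  have hsum := Phi_add_Phi_neg (c / 2 - t / c)
  have harg3 : -(c / 2 - t / c) = -c / 2 + t / c := by ring
  rw [harg3] at hsum
  linarith

lemma key_le_s {c : ℝ} (hc : 0 < c) {s : ℝ} (hs : 0 < s) :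
    s * stdNormalCDF (-c / 2 - Real.log s / c) +
      stdNormalCDF (-c / 2 + Real.log s / c) ≤ s := by
  have h := key_le_one hc (s := 1/s) (by positivity)
  rw [Real.log_div one_ne_zero hs.ne', Real.log_one, zero_sub] at h
  have h1 : -c / 2 - -Real.log s / c = -c / 2 + Real.log s / c := by ring
  have h2 : -c / 2 + -Real.log s / c = -c / 2 - Real.log s / c := by ring
  rw [h1, h2] at h
  have := mul_le_mul_of_nonneg_left h hs.le
  rw [mul_one, mul_add, ← mul_assoc, mul_one_div, div_self hs.ne', one_mul] at this
  linarith

end HRaux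

open HRaux in
/-- Properties of the Hüsler–Reiss dependence function. -/
theorem hrChi_properties (c : ℝ) (hc : 0 < c) :
    ContinuousOn (hrChi c) (Set.Ioi 0) ∧
    Filter.Tendsto (hrChi c) (nhdsWithin 0 (Set.Ioi 0)) (nhds 0) ∧
    Filter.Tendsto (fun s => hrChi c s / s) Filter.atTop (nhds 0) ∧
    (∀ s : ℝ, 0 < s → -min 1 s ≤ hrChi c s ∧ hrChi c s ≤ 0) ∧
    (∀ w₁ w₂ : ℝ, 0 < w₁ → 0 < w₂ →
      max (1 / w₁) (1 / w₂) ≤ 1 / w₁ + 1 / w₂ + (1 / w₂) * hrChi c (w₂ / w₁)) := by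
  -- continuity of the arguments
  have hlog : ContinuousOn Real.log (Set.Ioi 0) :=
    Real.continuousOn_log.mono (fun x hx => ne_of_gt hx)
  have harga : ContinuousOn (fun s : ℝ => -c / 2 - Real.log s / c) (Set.Ioi 0) :=
    continuousOn_const.sub (hlog.div_const c)
  have hargb : ContinuousOn (fun s : ℝ => -c / 2 + Real.log s / c) (Set.Ioi 0) :=
    continuousOn_const.add (hlog.div_const c)
  have hcont : ContinuousOn (hrChi c) (Set.Ioi 0) := by
    unfold hrChi
    exact ((continuousOn_id.neg.mul (Phi_continuous.comp_continuousOn harga)).sub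
      (Phi_continuous.comp_continuousOn hargb))
  refine ⟨hcont, ?_, ?_, ?_, ?_⟩
  · -- limit at 0⁺
    have hA : Filter.Tendsto (fun s : ℝ => s * stdNormalCDF (-c / 2 - Real.log s / c))
        (nhdsWithin 0 (Set.Ioi 0)) (nhds 0) := by
      refine tendsto_of_tendsto_of_tendsto_of_le_of_le' tendsto_const_nhds
        (Filter.tendsto_id.mono_left nhdsWithin_le_nhds) ?_ ?_
      · filter_upwards [self_mem_nhdsWithin] with s hs
        exact mul_nonneg (le_of_lt hs) (Phi_nonneg _)
      · filter_upwards [self_mem_nhdsWithin] with s hs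
        calc s * stdNormalCDF (-c / 2 - Real.log s / c) ≤ s * 1 :=
              mul_le_mul_of_nonneg_left (Phi_le_one _) (le_of_lt hs)
          _ = s := mul_one s
    have hB : Filter.Tendsto (fun s : ℝ => stdNormalCDF (-c / 2 + Real.log s / c))
        (nhdsWithin 0 (Set.Ioi 0)) (nhds 0) := by
      apply Phi_tendsto_atBot.comp
      have h1 : Filter.Tendsto (fun s : ℝ => Real.log s / c)
          (nhdsWithin 0 (Set.Ioi 0)) Filter.atBot :=
        Filter.Tendsto.atBot_div_const hc Real.tendsto_log_nhdsGT_zero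
      exact Filter.tendsto_atBot_add_const_left _ _ h1
    have := (hA.neg.sub hB)
    have heq : (fun s : ℝ => -(s * stdNormalCDF (-c / 2 - Real.log s / c))
        - stdNormalCDF (-c / 2 + Real.log s / c)) = hrChi c := by
      funext s; rw [hrChi]; ring
    rw [neg_zero, sub_zero] at this
    rw [← heq]
    exact this
  · -- limit at ∞ of hrChi c s / s
    have hA : Filter.Tendsto (fun s : ℝ => stdNormalCDF (-c / 2 - Real.log s / c))
        Filter.atTop (nhds 0) := by
      apply Phi_tendsto_atBot.comp
      have h1 : Filter.Tendsto (fun s : ℝ => Real.log s / c) Filter.atTop Filter.atTop :=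
        Filter.Tendsto.atTop_div_const hc Real.tendsto_log_atTop
      have h2 : Filter.Tendsto (fun s : ℝ => -(Real.log s / c)) Filter.atTop Filter.atBot :=
        Filter.tendsto_neg_atTop_atBot.comp h1
      have := Filter.tendsto_atBot_add_const_left _ (-c / 2) h2
      simpa only [← sub_eq_add_neg] using this
    have hB : Filter.Tendsto (fun s : ℝ => stdNormalCDF (-c / 2 + Real.log s / c) / s)
        Filter.atTop (nhds 0) := by
      refine tendsto_of_tendsto_of_tendsto_of_le_of_le' tendsto_const_nhds
        tendsto_inv_atTop_zero ?_ ?_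
      · filter_upwards [Filter.eventually_gt_atTop (0:ℝ)] with s hs
        exact div_nonneg (Phi_nonneg _) hs.le
      · filter_upwards [Filter.eventually_gt_atTop (0:ℝ)] with s hs
        rw [div_le_iff₀ hs, inv_mul_cancel₀ hs.ne']
        exact Phi_le_one _
    have heq : (fun s : ℝ => -stdNormalCDF (-c / 2 - Real.log s / c)
        - stdNormalCDF (-c / 2 + Real.log s / c) / s) =ᶠ[Filter.atTop]
        fun s => hrChi c s / s := by
      filter_upwards [Filter.eventually_gt_atTop (0:ℝ)] with s hs
      rw [hrChi]
      field_simp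
    have := (hA.neg.sub hB)
    rw [neg_zero, sub_zero] at this
    exact this.congr' heq
  · -- bounds
    intro s hs
    have h0a := Phi_nonneg (-c / 2 - Real.log s / c)
    have h0b := Phi_nonneg (-c / 2 + Real.log s / c)
    have h1 := key_le_one hc hs
    have h2 := key_le_s hc hs
    constructor
    · rw [hrChi]
      rcases le_total (1:ℝ) s with h | h
      · rw [min_eq_left h]; nlinarith
      · rw [min_eq_right h]; nlinarith
    · rw [hrChi]; nlinarith
  · -- the max inequality
    intro w₁ w₂ hw₁ hw₂
    have hs : (0:ℝ) < w₂ / w₁ := by positivity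
    have hlb : -min 1 (w₂ / w₁) ≤ hrChi c (w₂ / w₁) := by
      have h0a := Phi_nonneg (-c / 2 - Real.log (w₂ / w₁) / c)
      have h0b := Phi_nonneg (-c / 2 + Real.log (w₂ / w₁) / c)
      have h1 := key_le_one hc hs
      have h2 := key_le_s hc hs
      rw [hrChi]
      rcases le_total (1:ℝ) (w₂ / w₁) with h | h
      · rw [min_eq_left h]; nlinarith
      · rw [min_eq_right h]; nlinarith
    have hstep : 1 / w₁ + 1 / w₂ + (1 / w₂) * (-min 1 (w₂ / w₁)) ≤
        1 / w₁ + 1 / w₂ + (1 / w₂) * hrChi c (w₂ / w₁) := by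
      have := mul_le_mul_of_nonneg_left hlb (le_of_lt (by positivity : (0:ℝ) < 1 / w₂))
      linarith
    refine le_trans ?_ hstep
    rcases le_total w₂ w₁ with h | h
    · have hmin : min 1 (w₂ / w₁) = w₂ / w₁ :=
        min_eq_right ((div_le_one hw₁).2 h)
      rw [hmin]
      have hval : 1 / w₁ + 1 / w₂ + 1 / w₂ * -(w₂ / w₁) = 1 / w₂ := by
        field_simp
        ring
      rw [hval]
      exact max_le (one_div_le_one_div_of_le hw₂ h) le_rfl
    · have hmin : min 1 (w₂ / w₁) = 1 := min_eq_left ((one_le_div hw₁).2 h)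
      rw [hmin, mul_neg, mul_one]
      have hval : 1 / w₁ + 1 / w₂ + -(1 / w₂) = 1 / w₁ := by ring
      rw [hval]
      exact max_le le_rfl (one_div_le_one_div_of_le hw₁ h)
end
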